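/- arXiv:0710.5149 — 2 statements merged into one kernel-verified Lean document; each statement's English description precedes it below -/
import Mathlib

section
/- Let K be a perfect field of characteristic 2 and V an n-dimensional vector space over K with n odd. Then any two non-degenerate symmetric bilinear forms on V are equivalent, i.e., for any two such forms B and B' there exists an invertible linear map M : V → V with B'(x,y) = B(Mx, My) for all x, y in V. -/
/-!
An alternating nondegenerate form splits off hyperbolic planes, so it lives in even dimension;
hence in odd dimension neither form is alternating. A symmetric non-alternating form in
characteristic 2 has an orthonormal basis: split off a vector `e` with `B e e = 1` (square roots
exist since `K` is perfect), choosing `e` so that `e^⊥` is again non-alternating. If `v^⊥` is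
alternating for the first choice `v`, a pair `f, g ∈ v^⊥` with `B f g = B v v` yields the
orthogonal anisotropic vectors `v + f` and `v + g`. Two forms with orthonormal bases are equivalent.
-/

open LinearMap (BilinForm)
open LinearMap.BilinForm Submodule Module

namespace LinearMap.BilinForm

section CommSemiring

variable {R M : Type*} [CommSemiring R] [AddCommMonoid M] [Module R M]

def IsOrthonormal {ι : Type*} [DecidableEq ι] (B : BilinForm R M) (v : ι → M) : Prop :=
  ∀ i j, B (v i) (v j) = if i = j then 1 else 0

lemma isOrthonormal_cons {B : BilinForm R M} {m : ℕ} {e : M} {f : Fin m → M} (hee : B e e = 1)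
    (hef : ∀ i, B e (f i) = 0) (hfe : ∀ i, B (f i) e = 0) (hf : B.IsOrthonormal f) :
    B.IsOrthonormal (Fin.cons e f : Fin (m + 1) → M) := by
  intro i j
  cases i using Fin.cases <;> cases j using Fin.cases <;>
    simp [*, hf _ _, (Fin.succ_ne_zero _).symm]

lemma exists_linearEquiv_apply_eq_of_basis {ι : Type*} {B B' : BilinForm R M}
    (b b' : Basis ι R M) (h : ∀ i j, B' (b' i) (b' j) = B (b i) (b j)) :
    ∃ e : M ≃ₗ[R] M, ∀ x y, B' x y = B (e x) (e y) := by
  set e := b'.equiv b (Equiv.refl ι)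
  have : B' = B.compl₁₂ (e : M →ₗ[R] M) (e : M →ₗ[R] M) :=
    LinearMap.ext_basis b' b' fun i j => by simpa [e] using h i j
  exact ⟨e, fun x y => by rw [this]; rfl⟩

end CommSemiring

section Field

variable {K V : Type*} [Field K] [AddCommGroup V] [Module K V] {B : BilinForm K V}

lemma exists_apply_eq_of_ne_zero (hB : B.Nondegenerate) {x : V} (hx : x ≠ 0) (c : K) :
    ∃ y, B x y = c := by
  obtain ⟨y, hy⟩ : ∃ y, B x y ≠ 0 := by
    by_contra! h
    exact hx (hB.1 x h)
  exact ⟨(c / B x y) • y, by rw [smul_right, div_mul_cancel₀ c hy]⟩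

theorem IsAlt.even_finrank [FiniteDimensional K V] (hB : B.IsAlt) (hnd : B.Nondegenerate) :
    Even (finrank K V) := by
  induction hn : finrank K V using Nat.strong_induction_on generalizing V with
  | _ n ih =>
  rcases n.eq_zero_or_pos with rfl | hpos
  · exact ⟨0, rfl⟩
  have : Nontrivial V := finrank_pos_iff.mp (hn ▸ hpos)
  obtain ⟨x, hx⟩ := exists_ne (0 : V)
  obtain ⟨y, hxy⟩ := exists_apply_eq_of_ne_zero hnd hx 1
  have hyx : B y x = -1 := by rw [← hB.neg_eq, hxy]
  have hcoord (s t : K) : B x (s • x + t • y) = t ∧ B y (s • x + t • y) = -s := by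
    simp [hB.self_eq_zero, hxy, hyx]
  set U := span K {x, y}
  have hxU : x ∈ U := subset_span (by simp)
  have hyU : y ∈ U := subset_span (by simp)
  have hU : finrank K U = 2 := by
    have hli : LinearIndependent K ![x, y] := LinearIndependent.pair_iff.mpr fun s t h => by
      simpa [h, eq_comm, and_comm] using hcoord s t
    have := finrank_span_eq_card hli
    rwa [Matrix.range_cons_cons_empty, Fintype.card_fin] at this
  have hdisj : Disjoint (B.orthogonal U) (B.orthogonal (B.orthogonal U)) := by
    rw [orthogonal_orthogonal hnd hB.isRefl, disjoint_iff_inf_le]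
    rintro z ⟨hzo, hzU⟩
    obtain ⟨s, t, rfl⟩ := mem_span_pair.mp hzU
    have hx' := (mem_orthogonal_iff.mp hzo) x hxU
    have hy' := (mem_orthogonal_iff.mp hzo) y hyU
    rw [(hcoord s t).1] at hx'
    rw [(hcoord s t).2, neg_eq_zero] at hy'
    simp [hx', hy']
  obtain ⟨k, hk⟩ := ih (n - 2) (by omega) (B := B.restrict (B.orthogonal U)) (fun w => hB w)
    (nondegenerate_restrict_of_disjoint_orthogonal B hB.isRefl hdisj)
    (by rw [finrank_orthogonal hnd, hU, hn])
  have := hU ▸ finrank_le (R := K) U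
  exact ⟨k + 1, by omega⟩

lemma IsOrthonormal.linearIndependent {ι : Type*} [DecidableEq ι] {v : ι → V}
    (hv : B.IsOrthonormal v) : LinearIndependent K v :=
  linearIndependent_of_iIsOrtho (B := B) (fun i j hij => by simpa [hij] using hv i j)
    fun i => by simp [hv i i]

lemma exists_linearEquiv_of_isOrthonormal [FiniteDimensional K V] {ι : Type*} [Fintype ι]
    [DecidableEq ι] (hι : Fintype.card ι = finrank K V) {B' : BilinForm K V} {v v' : ι → V}
    (hv : B.IsOrthonormal v) (hv' : B'.IsOrthonormal v') :
    ∃ e : V ≃ₗ[K] V, ∀ x y, B' x y = B (e x) (e y) :=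
  exists_linearEquiv_apply_eq_of_basis
    (basisOfLinearIndependentOfCardEqFinrank' v hv.linearIndependent hι)
    (basisOfLinearIndependentOfCardEqFinrank' v' hv'.linearIndependent hι)
    fun i j => by simp [hv i j, hv' i j]

section CharTwo

variable [CharP K 2]

lemma exists_orthogonal_pair_apply_self_ne_zero [FiniteDimensional K V] (hB : B.IsRefl)
    (hnd : B.Nondegenerate) (hV : 2 ≤ finrank K V) {v : V} (hv : B v v ≠ 0) :
    ∃ u w, B u u ≠ 0 ∧ B u w = 0 ∧ B w w ≠ 0 := by
  set W := B.orthogonal (K ∙ v)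
  have hperp {w : V} (hw : w ∈ W) : B v w = 0 ∧ B w v = 0 :=
    have h := mem_orthogonal_iff.mp hw v (mem_span_singleton_self v)
    ⟨h, hB _ _ h⟩
  by_cases halt : ∀ w ∈ W, B w w = 0
  · have : Nontrivial W := finrank_pos_iff.mp <| by
      rw [finrank_orthogonal hnd, finrank_span_singleton (ne_zero_of_not_isOrtho_self v hv)]
      omega
    obtain ⟨f, hf⟩ := exists_ne (0 : W)
    obtain ⟨g, hfg⟩ := exists_apply_eq_of_ne_zero
      (restrict_nondegenerate_orthogonal_spanSingleton B hnd hB hv) hf (B v v)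
    have hfg : B f g = B v v := hfg
    -- `v + f` and `v + g` are orthogonal because `B f g = B v v` and `2 = 0`
    refine ⟨v + f, v + g, ?_, ?_, ?_⟩ <;>
      simp [(hperp f.2).1, (hperp f.2).2, (hperp g.2).1, (hperp g.2).2, halt f f.2, halt g g.2,
        hfg, hv, CharTwo.add_self_eq_zero]
  · push Not at halt
    obtain ⟨w, hw, hww⟩ := halt
    exact ⟨v, w, hv, (hperp hw).1, hww⟩

variable [PerfectField K]

lemma exists_smul_apply_self_eq_one {u : V} (hu : B u u ≠ 0) :
    ∃ c : K, B (c • u) (c • u) = 1 := by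
  have : ExpChar K 2 := ExpChar.prime Nat.prime_two
  obtain ⟨r, hr⟩ : ∃ r : K, r ^ 2 = B u u := ⟨_, frobeniusEquiv_symm_pow_p K 2 _⟩
  have hr0 : r ≠ 0 := by rintro rfl; exact hu (by simp [← hr])
  refine ⟨r⁻¹, ?_⟩
  rw [smul_left, smul_right, ← hr]
  field_simp

theorem exists_isOrthonormal_of_not_isAlt [FiniteDimensional K V] (hB : B.IsSymm)
    (hnd : B.Nondegenerate) (hna : ¬B.IsAlt) : ∃ v : Fin (finrank K V) → V, B.IsOrthonormal v := by
  induction hn : finrank K V using Nat.strong_induction_on generalizing V with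
  | _ n ih =>
  obtain ⟨v, hv⟩ : ∃ v, B v v ≠ 0 := by simpa [IsAlt, LinearMap.IsAlt] using hna
  have hpos : 0 < n :=
    hn ▸ finrank_pos_iff_exists_ne_zero.mpr ⟨v, ne_zero_of_not_isOrtho_self v hv⟩
  obtain ⟨u, w, huu, huw⟩ : ∃ u w, B u u ≠ 0 ∧ (n = 1 ∨ B u w = 0 ∧ B w w ≠ 0) := by
    rcases eq_or_ne n 1 with h1 | h1
    · exact ⟨v, v, hv, .inl h1⟩
    · obtain ⟨u, w, h⟩ := exists_orthogonal_pair_apply_self_ne_zero hB.isRefl hnd (by omega) hv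
      exact ⟨u, w, h.1, .inr h.2⟩
  obtain ⟨c, hee⟩ := exists_smul_apply_self_eq_one huu
  set e := c • u
  have he0 : e ≠ 0 := ne_zero_of_not_isOrtho_self (B := B) e (by simp [hee])
  set W := B.orthogonal (K ∙ e)
  have hWnd : (B.restrict W).Nondegenerate :=
    restrict_nondegenerate_orthogonal_spanSingleton B hnd hB.isRefl (by simp [hee])
  have hW : finrank K W = n - 1 := by
    rw [finrank_orthogonal hnd, finrank_span_singleton he0, hn]
  obtain ⟨m, rfl⟩ : ∃ m, n = m + 1 := ⟨n - 1, by omega⟩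
  obtain ⟨f, hf⟩ : ∃ f : Fin m → W, (B.restrict W).IsOrthonormal f := by
    rcases huw with h1 | ⟨huw, hww⟩
    · obtain rfl : m = 0 := by omega
      exact ⟨finZeroElim, finZeroElim⟩
    · have hwW : w ∈ W := by
        rw [show W = _ from orthogonal_span_singleton_eq_toLin_ker e]
        exact show B (c • u) w = 0 by simp [huw]
      exact ih m (by omega) (hB.restrict W) hWnd (fun h => hww (h ⟨w, hwW⟩)) (by omega)
  have hef (i : Fin m) : B e (f i) = 0 :=
    mem_orthogonal_iff.mp (f i).2 e (mem_span_singleton_self e)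
  exact ⟨_, isOrthonormal_cons hee hef (fun i => hB.isRefl _ _ (hef i)) hf⟩

end CharTwo

end Field

end LinearMap.BilinForm

/-- Over a perfect field of characteristic 2, on an odd-dimensional vector space,
any two non-degenerate symmetric bilinear forms are equivalent. -/
theorem odd_dim_nondeg_symm_bilin_equiv
    (K V : Type*) [Field K] [PerfectField K] [CharP K 2]
    [AddCommGroup V] [Module K V] [FiniteDimensional K V]
    (n : ℕ) (hn : Odd n) (hdim : Module.finrank K V = n)
    (B B' : LinearMap.BilinForm K V)
    (hB : B.IsSymm) (hB' : B'.IsSymm)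
    (hBnd : B.Nondegenerate) (hB'nd : B'.Nondegenerate) :
    ∃ M : V ≃ₗ[K] V, ∀ x y : V, B' x y = B (M x) (M y) := by
  have not_isAlt {C : BilinForm K V} (hC : C.Nondegenerate) : ¬C.IsAlt := fun hCalt =>
    Nat.not_even_iff_odd.mpr (hdim ▸ hn) (hCalt.even_finrank hC)
  obtain ⟨v, hv⟩ := exists_isOrthonormal_of_not_isAlt hB hBnd (not_isAlt hBnd)
  obtain ⟨v', hv'⟩ := exists_isOrthonormal_of_not_isAlt hB' hB'nd (not_isAlt hB'nd)
  exact exists_linearEquiv_of_isOrthonormal (Fintype.card_fin _) hv hv'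
end

section
/- Let g = g₀ ⊕ g₁ be a Lie superalgebra over a field of characteristic 2, defined with a squaring map sq : g₁ → g₀ satisfying sq(ax) = a² sq(x) and such that (x,y) ↦ sq(x+y) + sq(x) + sq(y) is bilinear, with the bracket on odd elements defined by [x,y] := sq(x+y) + sq(x) + sq(y). If the ground field has more than 2 elements, then the Jacobi-type identity [sq(x), y] = [x,[x,y]] for all x ∈ g₁, y ∈ g (condition (3)) is equivalent to the simpler condition [x, sq(x)] = 0 for all x ∈ g₁, together with the remaining Lie superalgebra axioms. -/
/-- Lie superalgebra in characteristic 2 with squaring `sq` on the odd part `g₁`,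
the odd-odd bracket being the polarization `b x y = sq (x+y) - sq x - sq y`.
If the ground field has more than two elements then, in the presence of the remaining
axioms (in particular the Jacobi identity `⁅a, sq x⁆ = b ⁅a,x⁆ x` for even `a`),
the Jacobi-type identity for two odd elements, `[sq x, y] = [x,[x,y]]`
(i.e. `⁅sq x, y⁆ = ⁅b x y, x⁆` for all odd `x, y`), is equivalent to the simpler
condition `[x, sq x] = 0` (i.e. `⁅sq x, x⁆ = 0`) for all odd `x`. -/
theorem jacobi_squaring_iff_simple_condition
    (K : Type*) [Field K] [CharP K 2] (hK : ∃ c : K, c ≠ 0 ∧ c ≠ 1)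
    (g0 : Type*) [LieRing g0] [LieAlgebra K g0]
    (g1 : Type*) [AddCommGroup g1] [Module K g1]
    [LieRingModule g0 g1] [LieModule K g0 g1]
    (sq : g1 → g0)
    (hsm : ∀ (a : K) (x : g1), sq (a • x) = (a * a) • sq x)
    (b : g1 →ₗ[K] g1 →ₗ[K] g0)
    (hb : ∀ x y : g1, b x y = sq (x + y) - sq x - sq y)
    (heven : ∀ (a : g0) (x : g1), ⁅a, sq x⁆ = b ⁅a, x⁆ x) :
    (∀ x y : g1, ⁅sq x, y⁆ = ⁅b x y, x⁆) ↔ (∀ x : g1, ⁅sq x, x⁆ = 0) := by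
  have two0 : (2 : K) = 0 := by
    have := CharP.cast_eq_zero K 2
    exact_mod_cast this
  have hsq0 : sq 0 = 0 := by
    have := hsm 0 0
    simpa using this
  have add_self_g0 : ∀ a : g0, a + a = 0 := fun a => by
    rw [← two_smul K a, two0, zero_smul]
  have add_self_g1 : ∀ v : g1, v + v = 0 := fun v => by
    rw [← two_smul K v, two0, zero_smul]
  constructor
  · intro h x
    have hbxx : b x x = 0 := by
      rw [hb, add_self_g1 x, hsq0, zero_sub, sub_eq_zero, neg_eq_iff_add_eq_zero,
        add_self_g0]
    rw [h x x, hbxx, zero_lie]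
  · intro h x y
    have expand : ∀ t : K,
        t • (⁅sq x, y⁆ + ⁅b x y, x⁆) + (t * t) • (⁅sq y, x⁆ + ⁅b x y, y⁆) = 0 := by
      intro t
      have e1 : sq (x + t • y) = t • b x y + sq x + (t * t) • sq y := by
        have e0 := hb x (t • y)
        rw [map_smul, hsm] at e0
        rw [eq_sub_iff_add_eq, eq_sub_iff_add_eq] at e0
        rw [← e0]; abel
      have h0 := h (x + t • y)
      rw [e1] at h0
      simp only [add_lie, lie_add, smul_lie, lie_smul, h x, h y, smul_zero, smul_add,
        smul_smul, add_zero, zero_add] at h0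
      rw [smul_add, smul_add, ← h0]
      abel
    obtain ⟨c, hc0, hc1⟩ := hK
    have eA := expand 1
    simp only [one_smul, one_mul] at eA
    set A := ⁅sq x, y⁆ + ⁅b x y, x⁆ with hA
    set B := ⁅sq y, x⁆ + ⁅b x y, y⁆ with hB
    have hBA : B = -A := by
      rw [eq_neg_iff_add_eq_zero, add_comm]; exact eA
    have eC := expand c
    rw [hBA, smul_neg, ← sub_eq_add_neg, ← sub_smul] at eC
    have hcA : A = 0 := by
      have hcz : c - c * c ≠ 0 := by
        have : c - c * c = c * (1 - c) := by ring
        rw [this]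
        exact mul_ne_zero hc0 (sub_ne_zero.mpr (Ne.symm hc1))
      exact (smul_eq_zero.mp eC).resolve_left hcz
    have : ⁅sq x, y⁆ = -⁅b x y, x⁆ := eq_neg_of_add_eq_zero_left hcA
    rw [this, neg_eq_of_add_eq_zero_right (add_self_g1 _)]
end
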